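/- If ℬ₁ and ℬ₂ are strong Markovian bisimulations, then the equivalence closure (transitive closure) of ℬ₁ ∪ ℬ₂ is a strong Markovian bisimulation. -/
import Mathlib


open scoped NNReal

/-- Total rate from `P` into a set of states `C`. -/
noncomputable def gammaSet {Proc : Type*} (γ : Proc → Proc → ℝ≥0) (P : Proc) (C : Set Proc) : ℝ≥0 :=
  ∑' x : C, γ P x

/-- `B` is a strong Markovian bisimulation. -/
def IsStrongBisim {Proc Label : Type*} (step : Proc → Label → Proc → Prop) (tau : Label)
    (γ : Proc → Proc → ℝ≥0) (B : Proc → Proc → Prop) : Prop :=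
  Equivalence B ∧
    ∀ P Q, B P Q →
      (∀ μ P', step P μ P' → ∃ Q', step Q μ Q' ∧ B P' Q') ∧
      ((∀ P', ¬ step P tau P') →
        ∀ R : Proc, gammaSet γ P {x | B R x} = gammaSet γ Q {x | B R x})

lemma gammaSet_eq_sum {Proc : Type*} (γ : Proc → Proc → ℝ≥0) (P : Proc)
    (hP : (Function.support (γ P)).Finite) (C : Set Proc) [DecidablePred (· ∈ C)] :
    gammaSet γ P C = ∑ x ∈ hP.toFinset.filter (· ∈ C), γ P x := by
  classical
  rw [gammaSet, tsum_subtype, tsum_eq_sum (s := hP.toFinset.filter (· ∈ C))]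
  · exact Finset.sum_congr rfl fun x hx => Set.indicator_of_mem (Finset.mem_filter.1 hx).2 _
  · intro b hb
    by_cases hbC : b ∈ C
    · rw [Set.indicator_of_mem hbC]
      by_contra h
      exact hb (Finset.mem_filter.2 ⟨hP.mem_toFinset.2 h, hbC⟩)
    · exact Set.indicator_of_notMem hbC _

/-- If `C` is closed under an equivalence `B₁`, and `P, Q` have the same rates into every
`B₁`-class, then they have the same rates into `C`. -/
lemma gammaSet_eq_of_union {Proc : Type*} (γ : Proc → Proc → ℝ≥0)
    (hfin : ∀ P, (Function.support (γ P)).Finite)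
    (B₁ : Proc → Proc → Prop) (e₁ : Equivalence B₁) (P Q : Proc)
    (hPQ : ∀ R, gammaSet γ P {x | B₁ R x} = gammaSet γ Q {x | B₁ R x})
    (C : Set Proc) (hC : ∀ x ∈ C, ∀ y, B₁ x y → y ∈ C) :
    gammaSet γ P C = gammaSet γ Q C := by
  classical
  set s : Setoid Proc := ⟨B₁, e₁⟩ with hs
  let q : Proc → Quotient s := Quotient.mk s
  let SP := (hfin P).toFinset.filter (· ∈ C)
  let SQ := (hfin Q).toFinset.filter (· ∈ C)
  let T : Finset (Quotient s) := SP.image q ∪ SQ.image q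
  have hclass : ∀ R ∈ C, ∀ (X : Proc) (hX : (Function.support (γ X)).Finite),
      ((hX.toFinset.filter (· ∈ C)).filter (fun x => q x = q R)).sum (γ X)
        = gammaSet γ X {x | B₁ R x} := by
    intro R hR X hX
    rw [gammaSet_eq_sum γ X hX]
    apply Finset.sum_congr _ (fun _ _ => rfl)
    ext x
    rw [Finset.mem_filter, Finset.mem_filter, Finset.mem_filter]
    constructor
    · rintro ⟨⟨hx, -⟩, hq⟩
      exact ⟨hx, show x ∈ {x | B₁ R x} from e₁.symm (Quotient.exact hq)⟩
    · rintro ⟨hx, hB⟩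
      exact ⟨⟨hx, hC R hR x hB⟩, Quotient.sound (e₁.symm hB)⟩
  have hmain : ∀ (X : Proc) (hX : (Function.support (γ X)).Finite),
      (∀ x ∈ hX.toFinset.filter (· ∈ C), q x ∈ T) →
      gammaSet γ X C = ∑ t ∈ T, ∑ x ∈ (hX.toFinset.filter (· ∈ C)).filter (fun x => q x = t), γ X x := by
    intro X hX hmaps
    rw [gammaSet_eq_sum γ X hX, ← Finset.sum_fiberwise_of_maps_to hmaps]
  have hPT : ∀ x ∈ SP, q x ∈ T := fun x hx => Finset.mem_union_left _ (Finset.mem_image_of_mem q hx)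
  have hQT : ∀ x ∈ SQ, q x ∈ T := fun x hx => Finset.mem_union_right _ (Finset.mem_image_of_mem q hx)
  rw [hmain P (hfin P) hPT, hmain Q (hfin Q) hQT]
  apply Finset.sum_congr rfl
  intro t ht
  obtain ⟨R, hRC, rfl⟩ : ∃ R, R ∈ C ∧ q R = t := by
    rcases Finset.mem_union.1 ht with h | h
    · obtain ⟨R, hR, hq⟩ := Finset.mem_image.1 h
      exact ⟨R, (Finset.mem_filter.1 hR).2, hq⟩
    · obtain ⟨R, hR, hq⟩ := Finset.mem_image.1 h
      exact ⟨R, (Finset.mem_filter.1 hR).2, hq⟩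
  rw [hclass R hRC P (hfin P), hclass R hRC Q (hfin Q), hPQ]

/-- Strong Markovian bisimilarity: union of all strong bisimulations. -/
theorem eqvGen_union_isStrongBisim {Proc Label : Type*}
    (step : Proc → Label → Proc → Prop) (tau : Label) (γ : Proc → Proc → ℝ≥0)
    (hfin : ∀ P, (Function.support (γ P)).Finite)
    (B₁ B₂ : Proc → Proc → Prop)
    (h₁ : IsStrongBisim step tau γ B₁) (h₂ : IsStrongBisim step tau γ B₂) :
    IsStrongBisim step tau γ (Relation.EqvGen (fun a b => B₁ a b ∨ B₂ a b)) := by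
  obtain ⟨e₁, hsr₁⟩ := h₁
  obtain ⟨e₂, hsr₂⟩ := h₂
  set r : Proc → Proc → Prop := fun a b => B₁ a b ∨ B₂ a b with hr
  set B : Proc → Proc → Prop := Relation.EqvGen r with hB
  have hequiv : Equivalence B := Relation.EqvGen.is_equivalence r
  refine ⟨hequiv, ?_⟩
  -- closedness of `B`-classes under `B₁` and `B₂`
  have hclosed : ∀ R : Proc, (∀ x ∈ {x | B R x}, ∀ y, B₁ x y → y ∈ {x | B R x}) ∧
      (∀ x ∈ {x | B R x}, ∀ y, B₂ x y → y ∈ {x | B R x}) := by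
    intro R
    constructor
    · intro x hx y hxy
      exact hequiv.trans hx (Relation.EqvGen.rel _ _ (Or.inl hxy))
    · intro x hx y hxy
      exact hequiv.trans hx (Relation.EqvGen.rel _ _ (Or.inr hxy))
  -- strengthened statement proved by induction on `EqvGen`
  suffices h : ∀ P Q, B P Q →
      (∀ μ P', step P μ P' → ∃ Q', step Q μ Q' ∧ B P' Q') ∧
      (∀ μ Q', step Q μ Q' → ∃ P', step P μ P' ∧ B Q' P') ∧
      ((∀ P', ¬ step P tau P') →
        ∀ R : Proc, gammaSet γ P {x | B R x} = gammaSet γ Q {x | B R x}) by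
    intro P Q hPQ
    exact ⟨(h P Q hPQ).1, (h P Q hPQ).2.2⟩
  intro P Q hPQ
  induction hPQ with
  | rel P Q h =>
    rcases h with h | h
    · refine ⟨?_, ?_, ?_⟩
      · intro μ P' hstep
        obtain ⟨Q', hQ', hB'⟩ := (hsr₁ P Q h).1 μ P' hstep
        exact ⟨Q', hQ', Relation.EqvGen.rel _ _ (Or.inl hB')⟩
      · intro μ Q' hstep
        obtain ⟨P', hP', hB'⟩ := (hsr₁ Q P (e₁.symm h)).1 μ Q' hstep
        exact ⟨P', hP', Relation.EqvGen.rel _ _ (Or.inl hB')⟩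
      · intro hnt R
        exact gammaSet_eq_of_union γ hfin B₁ e₁ P Q ((hsr₁ P Q h).2 hnt) _ (hclosed R).1
    · refine ⟨?_, ?_, ?_⟩
      · intro μ P' hstep
        obtain ⟨Q', hQ', hB'⟩ := (hsr₂ P Q h).1 μ P' hstep
        exact ⟨Q', hQ', Relation.EqvGen.rel _ _ (Or.inr hB')⟩
      · intro μ Q' hstep
        obtain ⟨P', hP', hB'⟩ := (hsr₂ Q P (e₂.symm h)).1 μ Q' hstep
        exact ⟨P', hP', Relation.EqvGen.rel _ _ (Or.inr hB')⟩
      · intro hnt R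
        exact gammaSet_eq_of_union γ hfin B₂ e₂ P Q ((hsr₂ P Q h).2 hnt) _ (hclosed R).2
  | refl P =>
    exact ⟨fun μ P' hstep => ⟨P', hstep, hequiv.refl P'⟩,
      fun μ P' hstep => ⟨P', hstep, hequiv.refl P'⟩, fun _ _ => rfl⟩
  | symm P Q hPQ ih =>
    refine ⟨ih.2.1, ih.1, ?_⟩
    intro hnt R
    have hntP : ∀ P', ¬ step P tau P' := by
      intro P' hstep
      obtain ⟨Q', hQ', -⟩ := ih.1 tau P' hstep
      exact hnt Q' hQ'
    exact (ih.2.2 hntP R).symm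
  | trans P Q S hPQ hQS ih1 ih2 =>
    refine ⟨?_, ?_, ?_⟩
    · intro μ P' hstep
      obtain ⟨Q', hQ', h1⟩ := ih1.1 μ P' hstep
      obtain ⟨S', hS', h2⟩ := ih2.1 μ Q' hQ'
      exact ⟨S', hS', hequiv.trans h1 h2⟩
    · intro μ S' hstep
      obtain ⟨Q', hQ', h1⟩ := ih2.2.1 μ S' hstep
      obtain ⟨P', hP', h2⟩ := ih1.2.1 μ Q' hQ'
      exact ⟨P', hP', hequiv.trans h1 h2⟩
    · intro hnt R
      have hntQ : ∀ Q', ¬ step Q tau Q' := by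
        intro Q' hstep
        obtain ⟨P', hP', -⟩ := ih1.2.1 tau Q' hstep
        exact hnt P' hP'
      exact (ih1.2.2 hnt R).trans (ih2.2.2 hntQ R)
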